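/- arXiv:1711.02601 — 8 statements merged into one kernel-verified Lean document; each statement's English description precedes it below -/
import Mathlib

section
/- Let v : 2^N → ℝ≥0 be a monotone function satisfying the gross substitutes condition (in the M♯-exchange formulation). Then for any price vector p ∈ ℝ^N, the function f(T) = max_{S ⊆ T} (v(S) - Σ_{i∈S} p_i) is submodular on 2^N. -/
/-!
Let `A` attain `f (T + i + j)` and `B ⊆ T` attain `f T`. If `i ∉ A`, then `A` is admissible for
`f (T + j)` and `B` for `f (T + i)`. Otherwise exchange `i` out of `A` by gross substitutes: the
result is a pair of bundles, one inside `T + j` and one inside `T + i`, whose values sum to at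
least `v A + v B`, and since prices are additive their costs sum to that of `A` and `B`.
-/

open Finset

section

variable {ι : Type*}

def surplus (v : Finset ι → ℝ) (p : ι → ℝ) (S : Finset ι) : ℝ := v S - ∑ i ∈ S, p i

def indirectUtility (v : Finset ι → ℝ) (p : ι → ℝ) (T : Finset ι) : ℝ :=
  T.powerset.sup' (powerset_nonempty T) (surplus v p)

section IndirectUtility

variable (v : Finset ι → ℝ) (p : ι → ℝ)

lemma surplus_le_indirectUtility {S T : Finset ι} (h : S ⊆ T) :
    surplus v p S ≤ indirectUtility v p T :=
  le_sup' (surplus v p) (mem_powerset.mpr h)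

lemma exists_subset_indirectUtility_eq (T : Finset ι) :
    ∃ S ⊆ T, indirectUtility v p T = surplus v p S := by
  obtain ⟨S, hS, h⟩ := exists_mem_eq_sup' (powerset_nonempty T) (surplus v p)
  exact ⟨S, mem_powerset.mp hS, h⟩

end IndirectUtility

section GrossSubstitutes

variable [DecidableEq ι] {v : Finset ι → ℝ}

/-- If the item swapped in already lies in `S`, monotonicity reduces the swap to the plain
transfer of `x`. -/
lemma exists_exchange_not_mem (hmono : ∀ S T : Finset ι, S ⊆ T → v S ≤ v T)
    (hGS : ∀ S T : Finset ι, ∀ x ∈ S,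
      v S + v T ≤ v (S.erase x) + v (insert x T) ∨
      ∃ y ∈ T, v S + v T ≤ v (insert y (S.erase x)) + v (insert x (T.erase y)))
    {S T : Finset ι} {x : ι} (hxS : x ∈ S) (hxT : x ∉ T) :
    v S + v T ≤ v (S.erase x) + v (insert x T) ∨
      ∃ y ∈ T, y ∉ S ∧ v S + v T ≤ v (insert y (S.erase x)) + v (insert x (T.erase y)) := by
  rcases hGS S T x hxS with h | ⟨y, hyT, h⟩
  · exact Or.inl h
  by_cases hyS : y ∈ S
  · have hyx : y ≠ x := ne_of_mem_of_not_mem hyT hxT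
    have hins : insert y (S.erase x) = S.erase x := insert_eq_self.mpr (mem_erase.mpr ⟨hyx, hyS⟩)
    have hle : v (insert x (T.erase y)) ≤ v (insert x T) :=
      hmono _ _ (insert_subset_insert _ (erase_subset _ _))
    left
    rw [hins] at h
    linarith
  · exact Or.inr ⟨y, hyT, hyS, h⟩

lemma exists_surplus_exchange (p : ι → ℝ) (hmono : ∀ S T : Finset ι, S ⊆ T → v S ≤ v T)
    (hGS : ∀ S T : Finset ι, ∀ x ∈ S,
      v S + v T ≤ v (S.erase x) + v (insert x T) ∨
      ∃ y ∈ T, v S + v T ≤ v (insert y (S.erase x)) + v (insert x (T.erase y)))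
    {S T : Finset ι} {x : ι} (hxS : x ∈ S) (hxT : x ∉ T) :
    ∃ S' T', S' ⊆ S.erase x ∪ T ∧ T' ⊆ insert x T ∧
      surplus v p S + surplus v p T ≤ surplus v p S' + surplus v p T' := by
  have hSx : ∑ k ∈ S.erase x, p k = ∑ k ∈ S, p k - p x := sum_erase_eq_sub hxS
  rcases exists_exchange_not_mem hmono hGS hxS hxT with h | ⟨y, hyT, hyS, h⟩
  · refine ⟨S.erase x, insert x T, subset_union_left, Subset.rfl, ?_⟩
    have hTx : ∑ k ∈ insert x T, p k = p x + ∑ k ∈ T, p k := sum_insert hxT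
    simp only [surplus]
    linarith
  · refine ⟨insert y (S.erase x), insert x (T.erase y), ?_, ?_, ?_⟩
    · exact insert_subset (mem_union_right _ hyT) subset_union_left
    · exact insert_subset_insert _ (erase_subset _ _)
    have hS' : ∑ k ∈ insert y (S.erase x), p k = p y + ∑ k ∈ S.erase x, p k :=
      sum_insert fun hy => hyS (mem_of_mem_erase hy)
    have hT' : ∑ k ∈ insert x (T.erase y), p k = p x + ∑ k ∈ T.erase y, p k :=
      sum_insert fun hx => hxT (mem_of_mem_erase hx)
    have hTy : ∑ k ∈ T.erase y, p k = ∑ k ∈ T, p k - p y := sum_erase_eq_sub hyT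
    simp only [surplus]
    linarith

lemma indirectUtility_insert_insert_add_le (p : ι → ℝ)
    (hmono : ∀ S T : Finset ι, S ⊆ T → v S ≤ v T)
    (hGS : ∀ S T : Finset ι, ∀ x ∈ S,
      v S + v T ≤ v (S.erase x) + v (insert x T) ∨
      ∃ y ∈ T, v S + v T ≤ v (insert y (S.erase x)) + v (insert x (T.erase y)))
    {T : Finset ι} {i j : ι} (hi : i ∉ T) :
    indirectUtility v p (insert i (insert j T)) + indirectUtility v p T ≤
      indirectUtility v p (insert i T) + indirectUtility v p (insert j T) := by
  obtain ⟨A, hA, hfA⟩ := exists_subset_indirectUtility_eq v p (insert i (insert j T))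
  obtain ⟨B, hB, hfB⟩ := exists_subset_indirectUtility_eq v p T
  rw [hfA, hfB]
  by_cases hiA : i ∈ A
  · obtain ⟨S', T', hS', hT', h⟩ := exists_surplus_exchange p hmono hGS hiA fun h => hi (hB h)
    have hS'j : S' ⊆ insert j T := hS'.trans <| union_subset
      (fun k hk => (mem_insert.mp (hA (mem_of_mem_erase hk))).resolve_left (ne_of_mem_erase hk))
      (hB.trans (subset_insert _ _))
    have hT'i : T' ⊆ insert i T := hT'.trans (insert_subset_insert _ hB)
    linarith [surplus_le_indirectUtility v p hS'j, surplus_le_indirectUtility v p hT'i]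
  · have hAj : A ⊆ insert j T := fun k hk =>
      (mem_insert.mp (hA hk)).resolve_left fun hki => hiA (hki ▸ hk)
    have hBi : B ⊆ insert i T := hB.trans (subset_insert _ _)
    linarith [surplus_le_indirectUtility v p hAj, surplus_le_indirectUtility v p hBi]

end GrossSubstitutes

end

theorem stmt1_general {ι : Type*} [DecidableEq ι]
    (v : Finset ι → ℝ)
    (hmono : ∀ S T : Finset ι, S ⊆ T → v S ≤ v T)
    (hGS : ∀ S T : Finset ι, ∀ x ∈ S,
      v S + v T ≤ v (S.erase x) + v (insert x T) ∨
      ∃ y ∈ T, v S + v T ≤ v (insert y (S.erase x)) + v (insert x (T.erase y)))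
    (p : ι → ℝ)
    (f : Finset ι → ℝ)
    (hf : ∀ T : Finset ι,
      f T = T.powerset.sup' (Finset.powerset_nonempty T)
        (fun S => v S - ∑ i ∈ S, p i)) :
    ∀ (T : Finset ι) (i j : ι), i ∉ T → j ∉ T → i ≠ j →
      f (insert i (insert j T)) + f T ≤ f (insert i T) + f (insert j T) := by
  obtain rfl : f = indirectUtility v p := funext hf
  intro T i j hi _ _
  exact indirectUtility_insert_insert_add_le p hmono hGS hi

/-- If a monotone nonnegative valuation `v` satisfies the gross substitutes
condition (M♯-exchange form), then for any price vector `p`, the indirect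
utility `f T = max_{S ⊆ T} (v S - Σ_{i∈S} p i)` is submodular. -/
theorem stmt1 {ι : Type*} [DecidableEq ι] [Fintype ι]
    (v : Finset ι → ℝ)
    (hmono : ∀ S T : Finset ι, S ⊆ T → v S ≤ v T)
    (hnn : ∀ S : Finset ι, 0 ≤ v S)
    (hGS : ∀ S T : Finset ι, ∀ x ∈ S,
      v S + v T ≤ v (S.erase x) + v (insert x T) ∨
      ∃ y ∈ T, v S + v T ≤ v (insert y (S.erase x)) + v (insert x (T.erase y)))
    (p : ι → ℝ)
    (f : Finset ι → ℝ)
    (hf : ∀ T : Finset ι,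
      f T = T.powerset.sup' (Finset.powerset_nonempty T)
        (fun S => v S - ∑ i ∈ S, p i)) :
    ∀ (T : Finset ι) (i j : ι), i ∉ T → j ∉ T → i ≠ j →
      f (insert i (insert j T)) + f T ≤ f (insert i T) + f (insert j T) :=
  stmt1_general v hmono hGS p f hf
end

section
/- Let F : ℝ≥0 → [0,1] be a cumulative distribution function with revenue curve R(w) = w(1 − F(w)). Suppose for some r ≥ 0 that R is non-increasing on [r,∞) and F is concave on [r,∞). Then for all x, y ≥ r, z = αx + (1−α)y with α ∈ [0,1], we have R(z) ≤ 4αR(x) + 4(1−α)R(y). Consequently there exists a convex non-increasing function R̂ on [r,∞) with R̂(w) ≤ R(w) ≤ 4R̂(w) for all w ≥ r. -/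
/-!
Write `R w = w q(w)` with `q = 1 - F` convex and nonnegative on `[r, ∞)`. For a convex
combination `w = ∑ lᵢ xᵢ`, clip the points from below at `m = max (w / 2, r)`: the clipped
points `yᵢ = max xᵢ m` have a mean `w' ≥ w`, and `w` lies between `m` and `w'` with the weight
on `m` at most the mass `ν` of the clipped points. Convexity and Jensen give
`q w ≤ ν q(m) + ∑ lᵢ q(yᵢ)`; multiplying by `w ≤ 2m ≤ 2yᵢ` turns this into
`R w ≤ 2 ν R(m) + 2 ∑ lᵢ R(xᵢ)`, and `ν R(m) ≤ ∑ lᵢ R(xᵢ)` because `R` is non-increasing.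
So `R` is within a factor `4` of every convex combination of its values, i.e. of its lower
convex envelope, which is convex by construction and non-increasing because the epigraph of
`R` is stable under moving right.
-/

open Set Finset
open scoped Pointwise

theorem ConvexOn.le_mul_add_of_sub_le {s : Set ℝ} {q : ℝ → ℝ} (hq : ConvexOn ℝ s q)
    {m w w' ν : ℝ} (hm : m ∈ s) (hw' : w' ∈ s) (hmw : m ≤ w) (hww' : w ≤ w') (hν : 0 ≤ ν)
    (hνw : w' - w ≤ ν * (w' - m)) (hqm : 0 ≤ q m) (hqw' : 0 ≤ q w') :
    q w ≤ ν * q m + q w' := by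
  rcases (hmw.trans hww').eq_or_lt with h | h
  · obtain rfl : w = w' := le_antisymm hww' (h ▸ hmw)
    nlinarith
  set c := (w' - w) / (w' - m)
  have hc0 : 0 ≤ c := div_nonneg (by linarith) (by linarith)
  have hcν : c ≤ ν := (div_le_iff₀ (by linarith)).2 hνw
  have hc1 : c ≤ 1 := (div_le_one (by linarith)).2 (by linarith)
  have hw : c • m + (1 - c) • w' = w := by
    simp only [c, smul_eq_mul]; field_simp; ring
  calc q w = q (c • m + (1 - c) • w') := by rw [hw]
    _ ≤ c • q m + (1 - c) • q w' := hq.2 hm hw' hc0 (by linarith) (by ring)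
    _ ≤ ν * q m + q w' := by simp only [smul_eq_mul]; nlinarith

theorem sum_mul_max_sub_le {ι : Type*} {t : Finset ι} {l x : ι → ℝ} {r : ℝ} (m : ℝ)
    (hl : ∀ i ∈ t, 0 ≤ l i) (hx : ∀ i ∈ t, r ≤ x i) :
    ∑ i ∈ t, l i * (max (x i) m - x i) ≤ (∑ i ∈ t with x i < m, l i) * (m - r) := by
  rw [sum_mul, sum_filter]
  refine sum_le_sum fun i hi => ?_
  split_ifs with h
  · rw [max_eq_right h.le]
    exact mul_le_mul_of_nonneg_left (by linarith [hx i hi]) (hl i hi)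
  · rw [max_eq_left (not_lt.1 h), sub_self, mul_zero]

theorem sum_filter_lt_mul_le_sum_mul {ι : Type*} {t : Finset ι} {l x : ι → ℝ} {R : ℝ → ℝ}
    {r m : ℝ} (hR0 : ∀ x ∈ Ici r, 0 ≤ R x) (hR : AntitoneOn R (Ici r)) (hm : r ≤ m)
    (hl : ∀ i ∈ t, 0 ≤ l i) (hx : ∀ i ∈ t, r ≤ x i) :
    (∑ i ∈ t with x i < m, l i) * R m ≤ ∑ i ∈ t, l i * R (x i) := by
  rw [sum_mul, sum_filter]
  refine sum_le_sum fun i hi => ?_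
  split_ifs with h
  · exact mul_le_mul_of_nonneg_left (hR (hx i hi) hm h.le) (hl i hi)
  · exact mul_nonneg (hl i hi) (hR0 _ (hx i hi))

theorem ConvexOn.le_mul_add_sum_max {ι : Type*} {q : ℝ → ℝ} {r m : ℝ}
    (hq : ConvexOn ℝ (Ici r) q) (hq0 : ∀ x ∈ Ici r, 0 ≤ q x) {t : Finset ι} {l x : ι → ℝ}
    (hl : ∀ i ∈ t, 0 ≤ l i) (hl1 : ∑ i ∈ t, l i = 1) (hx : ∀ i ∈ t, r ≤ x i) (hrm : r ≤ m)
    (hmw : m ≤ ∑ i ∈ t, l i * x i) (hmwr : 2 * m ≤ ∑ i ∈ t, l i * x i + r) :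
    q (∑ i ∈ t, l i * x i) ≤
      (∑ i ∈ t with x i < m, l i) * q m + ∑ i ∈ t, l i * q (max (x i) m) := by
  set w := ∑ i ∈ t, l i * x i
  set w' := ∑ i ∈ t, l i * max (x i) m
  set ν := ∑ i ∈ t with x i < m, l i
  have hyr : ∀ i ∈ t, r ≤ max (x i) m := fun i _ => hrm.trans (le_max_right _ _)
  have hww' : w ≤ w' :=
    sum_le_sum fun i hi => mul_le_mul_of_nonneg_left (le_max_left _ _) (hl i hi)
  have hw'r : r ≤ w' := (hrm.trans hmw).trans hww'
  have hν : 0 ≤ ν := sum_nonneg fun i hi => hl i (mem_filter.1 hi).1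
  have hclip : w' - w ≤ ν * (m - r) := by
    simpa only [w', w, ← sum_sub_distrib, mul_sub] using sum_mul_max_sub_le m hl hx
  have hjensen : q w' ≤ ∑ i ∈ t, l i * q (max (x i) m) := by
    simpa only [smul_eq_mul] using hq.map_sum_le hl hl1 hyr
  have hνw : w' - w ≤ ν * (w' - m) := hclip.trans (mul_le_mul_of_nonneg_left (by linarith) hν)
  have := hq.le_mul_add_of_sub_le hrm hw'r hmw hww' hν hνw (hq0 m hrm) (hq0 w' hw'r)
  linarith

theorem mul_le_four_mul_sum_of_convexOn {ι : Type*} {q R : ℝ → ℝ} {r : ℝ} (hr : 0 ≤ r)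
    (hq : ConvexOn ℝ (Ici r) q) (hq0 : ∀ x ∈ Ici r, 0 ≤ q x) (hR : ∀ x, R x = x * q x)
    (hRanti : AntitoneOn R (Ici r)) {t : Finset ι} {l x : ι → ℝ} (hl : ∀ i ∈ t, 0 ≤ l i)
    (hl1 : ∑ i ∈ t, l i = 1) (hx : ∀ i ∈ t, r ≤ x i) :
    R (∑ i ∈ t, l i * x i) ≤ 4 * ∑ i ∈ t, l i * R (x i) := by
  set w := ∑ i ∈ t, l i * x i
  have hrw : r ≤ w := calc
    r = ∑ i ∈ t, l i * r := by rw [← sum_mul, hl1, one_mul]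
    _ ≤ w := sum_le_sum fun i hi => mul_le_mul_of_nonneg_left (hx i hi) (hl i hi)
  set m := max (w / 2) r
  have hrm : r ≤ m := le_max_right _ _
  have hmw : m ≤ w := max_le (by linarith) hrw
  have hwm : w ≤ 2 * m := by linarith [le_max_left (w / 2) r]
  have hmwr : 2 * m ≤ w + r := by
    rcases max_choice (w / 2) r with h | h <;> simp only [m, h] <;> linarith
  have hqw := hq.le_mul_add_sum_max hq0 hl hl1 hx hrm hmw hmwr
  set ν := ∑ i ∈ t with x i < m, l i
  have hν : 0 ≤ ν := sum_nonneg fun i hi => hl i (mem_filter.1 hi).1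
  have hR0 : ∀ x ∈ Ici r, 0 ≤ R x := fun x hx => (hR x).symm ▸ mul_nonneg (hr.trans hx) (hq0 x hx)
  have hqm : w * q m ≤ 2 * R m := by rw [hR]; nlinarith [hq0 m hrm]
  have hqy : ∀ i ∈ t, w * q (max (x i) m) ≤ 2 * R (x i) := fun i hi => by
    have hyr : r ≤ max (x i) m := hrm.trans (le_max_right _ _)
    calc w * q (max (x i) m) ≤ 2 * R (max (x i) m) := by
          rw [hR]; nlinarith [hq0 _ hyr, le_max_right (x i) m]
      _ ≤ 2 * R (x i) := by linarith [hRanti (hx i hi) hyr (le_max_left (x i) m)]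
  calc R w = w * q w := hR w
    _ ≤ w * (ν * q m + ∑ i ∈ t, l i * q (max (x i) m)) :=
      mul_le_mul_of_nonneg_left hqw (hr.trans hrw)
    _ = ν * (w * q m) + ∑ i ∈ t, l i * (w * q (max (x i) m)) := by
      simp only [mul_add, mul_sum, mul_left_comm w]
    _ ≤ ν * (2 * R m) + ∑ i ∈ t, l i * (2 * R (x i)) :=
      add_le_add (mul_le_mul_of_nonneg_left hqm hν)
        (sum_le_sum fun i hi => mul_le_mul_of_nonneg_left (hqy i hi) (hl i hi))
    _ = 2 * (ν * R m) + 2 * ∑ i ∈ t, l i * R (x i) := by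
      simp only [mul_sum, mul_left_comm _ (2 : ℝ)]
    _ ≤ 4 * ∑ i ∈ t, l i * R (x i) := by
      linarith [sum_filter_lt_mul_le_sum_mul hR0 hRanti hrm hl hx (m := m)]

section LowerConvexEnvelope

variable {E : Type*} [AddCommGroup E] [Module ℝ E] {s : Set E} {f : E → ℝ} {x : E}

def epigraphOn (s : Set E) (f : E → ℝ) : Set (E × ℝ) := {p | p.1 ∈ s ∧ f p.1 ≤ p.2}

noncomputable def lowerConvexEnvelope (s : Set E) (f : E → ℝ) (x : E) : ℝ :=
  sInf {v | (x, v) ∈ convexHull ℝ (epigraphOn s f)}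

theorem mk_mem_convexHull_epigraphOn (hx : x ∈ s) : (x, f x) ∈ convexHull ℝ (epigraphOn s f) :=
  subset_convexHull ℝ _ ⟨hx, le_rfl⟩

theorem lowerConvexEnvelope_le (hx : x ∈ s)
    (hbdd : BddBelow {v | (x, v) ∈ convexHull ℝ (epigraphOn s f)}) :
    lowerConvexEnvelope s f x ≤ f x :=
  csInf_le hbdd (mk_mem_convexHull_epigraphOn hx)

theorem bddBelow_fiber_convexHull_epigraphOn {C : ℝ} (hC : 0 < C)
    (hf : ∀ p ∈ convexHull ℝ (epigraphOn s f), f p.1 ≤ C * p.2) (x : E) :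
    BddBelow {v | (x, v) ∈ convexHull ℝ (epigraphOn s f)} :=
  ⟨f x / C, fun _ hv => (div_le_iff₀' hC).2 (hf _ hv)⟩

theorem le_mul_lowerConvexEnvelope {C : ℝ} (hC : 0 < C)
    (hf : ∀ p ∈ convexHull ℝ (epigraphOn s f), f p.1 ≤ C * p.2) (hx : x ∈ s) :
    f x ≤ C * lowerConvexEnvelope s f x := by
  rw [← div_le_iff₀' hC]
  exact le_csInf ⟨f x, by exact mk_mem_convexHull_epigraphOn hx⟩ fun _ hv =>
    (div_le_iff₀' hC).2 (hf _ hv)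

theorem exists_lt_lowerConvexEnvelope_add (hx : x ∈ s) {ε : ℝ} (hε : 0 < ε) :
    ∃ u, (x, u) ∈ convexHull ℝ (epigraphOn s f) ∧ u < lowerConvexEnvelope s f x + ε :=
  Real.lt_sInf_add_pos ⟨f x, by exact mk_mem_convexHull_epigraphOn hx⟩ hε

theorem convexOn_lowerConvexEnvelope (hs : Convex ℝ s)
    (hbdd : ∀ x ∈ s, BddBelow {v | (x, v) ∈ convexHull ℝ (epigraphOn s f)}) :
    ConvexOn ℝ s (lowerConvexEnvelope s f) := by
  refine ⟨hs, fun a ha b hb α β hα hβ hαβ => le_of_forall_pos_le_add fun ε hε => ?_⟩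
  obtain ⟨u, hu, hua⟩ := exists_lt_lowerConvexEnvelope_add ha hε
  obtain ⟨v, hv, hvb⟩ := exists_lt_lowerConvexEnvelope_add hb hε
  have hmem : (α • a + β • b, α • u + β • v) ∈ convexHull ℝ (epigraphOn s f) := by
    simpa only [Prod.smul_mk, Prod.mk_add_mk] using convex_convexHull ℝ _ hu hv hα hβ hαβ
  calc lowerConvexEnvelope s f (α • a + β • b) ≤ α • u + β • v :=
        csInf_le (hbdd _ (hs ha hb hα hβ hαβ)) hmem
    _ ≤ α • (lowerConvexEnvelope s f a + ε) + β • (lowerConvexEnvelope s f b + ε) := by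
        gcongr
    _ = α • lowerConvexEnvelope s f a + β • lowerConvexEnvelope s f b + ε := by
        simp only [smul_eq_mul]; linear_combination ε * hαβ

end LowerConvexEnvelope

theorem antitoneOn_lowerConvexEnvelope {f : ℝ → ℝ} {r : ℝ} (hf : AntitoneOn f (Ici r))
    (hbdd : ∀ x ∈ Ici r, BddBelow {v | (x, v) ∈ convexHull ℝ (epigraphOn (Ici r) f)}) :
    AntitoneOn (lowerConvexEnvelope (Ici r) f) (Ici r) := by
  intro a ha b hb hab
  have hshift : (b - a, (0 : ℝ)) +ᵥ epigraphOn (Ici r) f ⊆ epigraphOn (Ici r) f := by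
    rintro _ ⟨⟨x, v⟩, ⟨hx, hxv⟩, rfl⟩
    have hx' : r ≤ b - a + x := by linarith [mem_Ici.1 hx]
    exact ⟨hx', (hf hx hx' (by linarith)).trans (by simpa using hxv)⟩
  refine csInf_le_csInf (hbdd b hb) ⟨f a, by exact mk_mem_convexHull_epigraphOn ha⟩ fun v hv => ?_
  have hmem : (b - a, (0 : ℝ)) +ᵥ (a, v) ∈
      convexHull ℝ ((b - a, (0 : ℝ)) +ᵥ epigraphOn (Ici r) f) := by
    rw [convexHull_vadd]
    exact vadd_mem_vadd_set hv
  simpa using convexHull_mono hshift hmem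

theorem le_four_mul_of_mem_convexHull_epigraphOn {q R : ℝ → ℝ} {r : ℝ} (hr : 0 ≤ r)
    (hq : ConvexOn ℝ (Ici r) q) (hq0 : ∀ x ∈ Ici r, 0 ≤ q x) (hR : ∀ x, R x = x * q x)
    (hRanti : AntitoneOn R (Ici r)) :
    ∀ p ∈ convexHull ℝ (epigraphOn (Ici r) R), R p.1 ≤ 4 * p.2 := by
  intro p hp
  rw [_root_.convexHull_eq] at hp
  obtain ⟨ι, t, l, z, hl, hl1, hz, rfl⟩ := hp
  simp only [centerMass_eq_of_sum_1 _ _ hl1, Prod.fst_sum, Prod.snd_sum, Prod.smul_fst,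
    Prod.smul_snd, smul_eq_mul]
  calc R (∑ i ∈ t, l i * (z i).1) ≤ 4 * ∑ i ∈ t, l i * R (z i).1 :=
        mul_le_four_mul_sum_of_convexOn hr hq hq0 hR hRanti hl hl1 fun i hi => (hz i hi).1
    _ ≤ 4 * ∑ i ∈ t, l i * (z i).2 := by
        gcongr with i hi
        · exact hl i hi
        · exact (hz i hi).2

theorem stmt2_general (F : ℝ → ℝ)
    (hF1 : ∀ w, F w ≤ 1)
    (R : ℝ → ℝ) (hR : ∀ w, R w = w * (1 - F w))
    (r : ℝ) (hr : 0 ≤ r)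
    (hRmono : AntitoneOn R (Set.Ici r))
    (hFconc : ConcaveOn ℝ (Set.Ici r) F) :
    (∀ x y α : ℝ, r ≤ x → r ≤ y → 0 ≤ α → α ≤ 1 →
        R (α * x + (1 - α) * y) ≤ 4 * α * R x + 4 * (1 - α) * R y) ∧
    ∃ Rhat : ℝ → ℝ, ConvexOn ℝ (Set.Ici r) Rhat ∧ AntitoneOn Rhat (Set.Ici r) ∧
      ∀ w, r ≤ w → Rhat w ≤ R w ∧ R w ≤ 4 * Rhat w := by
  have hq : ConvexOn ℝ (Ici r) fun w => 1 - F w := (convexOn_const 1 (convex_Ici r)).sub hFconc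
  have hhull := le_four_mul_of_mem_convexHull_epigraphOn hr hq (fun w _ => sub_nonneg.2 (hF1 w))
    hR hRmono
  have hbdd := bddBelow_fiber_convexHull_epigraphOn four_pos hhull
  refine ⟨fun x y α hx hy hα0 hα1 => ?_, lowerConvexEnvelope (Ici r) R,
    convexOn_lowerConvexEnvelope (convex_Ici r) fun w _ => hbdd w,
    antitoneOn_lowerConvexEnvelope hRmono fun w _ => hbdd w,
    fun w hw =>
      ⟨lowerConvexEnvelope_le hw (hbdd w), le_mul_lowerConvexEnvelope four_pos hhull hw⟩⟩
  have hmem := convex_convexHull ℝ (epigraphOn (Ici r) R) (mk_mem_convexHull_epigraphOn hx)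
    (mk_mem_convexHull_epigraphOn hy) hα0 (sub_nonneg.2 hα1) (add_sub_cancel α 1)
  have := hhull _ hmem
  simp only [Prod.smul_mk, Prod.mk_add_mk, smul_eq_mul] at this
  linarith

/-- If the revenue curve `R w = w (1 - F w)` of a CDF `F` is non-increasing on
`[r, ∞)` and `F` is concave there, then `R` is 4-approximately convex on
`[r, ∞)`, and there is a convex non-increasing `R̂` with `R̂ ≤ R ≤ 4 R̂` there. -/
theorem stmt2 (F : ℝ → ℝ) (hFmono : Monotone F)
    (hF0 : ∀ w, 0 ≤ F w) (hF1 : ∀ w, F w ≤ 1)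
    (R : ℝ → ℝ) (hR : ∀ w, R w = w * (1 - F w))
    (r : ℝ) (hr : 0 ≤ r)
    (hRmono : AntitoneOn R (Set.Ici r))
    (hFconc : ConcaveOn ℝ (Set.Ici r) F) :
    (∀ x y α : ℝ, r ≤ x → r ≤ y → 0 ≤ α → α ≤ 1 →
        R (α * x + (1 - α) * y) ≤ 4 * α * R x + 4 * (1 - α) * R y) ∧
    ∃ Rhat : ℝ → ℝ, ConvexOn ℝ (Set.Ici r) Rhat ∧ AntitoneOn Rhat (Set.Ici r) ∧
      ∀ w, r ≤ w → Rhat w ≤ R w ∧ R w ≤ 4 * Rhat w :=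
  stmt2_general F hF1 R hR r hr hRmono hFconc
end

section
/- Let F be a CDF with revenue curve R(w) = w(1−F(w)), and suppose R is non-increasing and F is concave on [r,∞) for some r ≥ 0. Suppose x, y ≥ r, x ≤ y, α ∈ [0,1/2), and z = αx + (1−α)y. Then 4αR(x) ≥ R(z) − 2(1−α)R(y). -/
/-!
Write `m = (x + y) / 2`, so that `z = 2α m + (1 - 2α) y` is a convex combination of two points
of `[r, ∞)`. Concavity of `F` bounds `1 - F z` by `2α (1 - F m) + (1 - 2α) (1 - F y)`; multiplying
by `z` and using `z ≤ 2m`, `z ≤ y` gives `R z ≤ 4α R m + (1 - 2α) R y`. Finally `R m ≤ R x` by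
monotonicity of `R`, and `1 - 2α ≤ 2 (1 - α)` since `R y ≥ 0`.
-/

theorem ConcaveOn.mul_one_sub_le {F : ℝ → ℝ} {s : Set ℝ} (hF : ConcaveOn ℝ s F)
    {a b t w : ℝ} (ha : a ∈ s) (hb : b ∈ s) (ht0 : 0 ≤ t) (ht1 : t ≤ 1)
    (hw : w = t * a + (1 - t) * b) (hw0 : 0 ≤ w) :
    w * (1 - F w) ≤ t * (w * (1 - F a)) + (1 - t) * (w * (1 - F b)) := by
  have hconc : t * F a + (1 - t) * F b ≤ F w := by
    simpa only [smul_eq_mul, hw] using hF.2 ha hb ht0 (sub_nonneg.2 ht1) (by ring)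
  nlinarith [mul_le_mul_of_nonneg_left hconc hw0]

theorem stmt3_general (F : ℝ → ℝ)
    (hF1 : ∀ w, F w ≤ 1)
    (R : ℝ → ℝ) (hR : ∀ w, R w = w * (1 - F w))
    (r : ℝ) (hr : 0 ≤ r)
    (hRmono : AntitoneOn R (Set.Ici r))
    (hFconc : ConcaveOn ℝ (Set.Ici r) F)
    (x y α z : ℝ) (hx : r ≤ x) (hy : r ≤ y) (hxy : x ≤ y)
    (hα0 : 0 ≤ α) (hα : α < 1 / 2)
    (hz : z = α * x + (1 - α) * y) :
    R z - 2 * (1 - α) * R y ≤ 4 * α * R x := by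
  set m := (x + y) / 2 with hm
  have hmr : r ≤ m := by linarith
  have hz0 : 0 ≤ z := by rw [hz]; nlinarith
  have hzy : z ≤ y := by rw [hz]; nlinarith [mul_le_mul_of_nonneg_left hxy hα0]
  have hzRm : z * (1 - F m) ≤ 2 * R m := by
    rw [hR, ← mul_assoc]; exact mul_le_mul_of_nonneg_right (by linarith) (sub_nonneg.2 (hF1 m))
  have hzRy : z * (1 - F y) ≤ R y := by
    rw [hR]; exact mul_le_mul_of_nonneg_right hzy (sub_nonneg.2 (hF1 y))
  have hRmx : R m ≤ R x := hRmono (Set.mem_Ici.2 hx) (Set.mem_Ici.2 hmr) (by linarith)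
  have hRy0 : 0 ≤ R y := by rw [hR]; exact mul_nonneg (by linarith) (sub_nonneg.2 (hF1 y))
  have hRz : R z ≤ 2 * α * (2 * R m) + (1 - 2 * α) * R y :=
    calc R z = z * (1 - F z) := hR z
      _ ≤ 2 * α * (z * (1 - F m)) + (1 - 2 * α) * (z * (1 - F y)) :=
        hFconc.mul_one_sub_le (Set.mem_Ici.2 hmr) (Set.mem_Ici.2 hy) (by linarith)
          (by linarith) (by rw [hz]; ring) hz0
      _ ≤ 2 * α * (2 * R m) + (1 - 2 * α) * R y := by
        gcongr
        linarith
  linarith [mul_le_mul_of_nonneg_left hRmx hα0, mul_nonneg hα0 hRy0]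

/-- Core case of the 4-approximate-convexity of the revenue curve: if `R` is
non-increasing and `F` concave on `[r, ∞)`, `x ≤ y` in `[r, ∞)`, `α ∈ [0, 1/2)`
and `z = αx + (1-α)y`, then `4αR(x) ≥ R(z) − 2(1−α)R(y)`. -/
theorem stmt3 (F : ℝ → ℝ) (hFmono : Monotone F)
    (hF0 : ∀ w, 0 ≤ F w) (hF1 : ∀ w, F w ≤ 1)
    (R : ℝ → ℝ) (hR : ∀ w, R w = w * (1 - F w))
    (r : ℝ) (hr : 0 ≤ r)
    (hRmono : AntitoneOn R (Set.Ici r))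
    (hFconc : ConcaveOn ℝ (Set.Ici r) F)
    (x y α z : ℝ) (hx : r ≤ x) (hy : r ≤ y) (hxy : x ≤ y)
    (hα0 : 0 ≤ α) (hα : α < 1 / 2)
    (hz : z = α * x + (1 - α) * y) :
    R z - 2 * (1 - α) * R y ≤ 4 * α * R x :=
  stmt3_general F hF1 R hR r hr hRmono hFconc x y α z hx hy hxy hα0 hα hz
end

section
/- Consider an assortment T with undominated purchase options ordered as (v_0,p_0)=(0,0) < (v_1,p_1) < ... < (v_m,p_m) (coordinatewise increasing), and let w_i = (p_i − p_{i−1})/(v_i − v_{i−1}) be the indifference point between consecutive options, with w_0 = 0 and w_{m+1} = +∞. If the buyer's type w is drawn from distribution F and the buyer purchases the option maximizing w·v − p, then the expected revenue equals Σ_{i=1}^{m} (v_i − v_{i−1})·R(w_i), where R(w) = w(1−F(w)). -/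
/-! Abel summation: the revenue `Σ pᵢ (F(wᵢ₊₁) − F(wᵢ))` is rewritten as `Σ (pᵢ − pᵢ₋₁)(1 − F(wᵢ))`,
and at each indifference point the price increment is `pᵢ − pᵢ₋₁ = (vᵢ − vᵢ₋₁) wᵢ`. -/

open Finset

theorem sum_Ico_mul_sub_add_eq_sum_Icc_sub_mul {R : Type*} [CommRing R] (p G : ℕ → R)
    (hp0 : p 0 = 0) (m : ℕ) :
    ∑ i ∈ Ico 1 m, p i * (G i - G (i + 1)) + p m * G m
      = ∑ i ∈ Icc 1 m, (p i - p (i - 1)) * G i := by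
  induction m with
  | zero => simp [hp0]
  | succ n ih =>
    rcases Nat.eq_zero_or_pos n with rfl | hn
    · simp [hp0]
    rw [sum_Ico_succ_top hn, sum_Icc_succ_top (by omega), ← ih, Nat.add_sub_cancel]
    ring

theorem stmt4_general (m : ℕ) (v p : ℕ → ℝ)
    (hp0 : p 0 = 0)
    (hvmono : ∀ i, i < m → v i < v (i + 1))
    (w : ℕ → ℝ)
    (hw : ∀ i, 1 ≤ i → i ≤ m → w i = (p i - p (i - 1)) / (v i - v (i - 1)))
    (F : ℝ → ℝ) :
    (∑ i ∈ Finset.Ico 1 m, p i * (F (w (i + 1)) - F (w i)))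
        + p m * (1 - F (w m))
      = ∑ i ∈ Finset.Icc 1 m, (v i - v (i - 1)) * (w i * (1 - F (w i))) := by
  have price_step : ∀ i ∈ Icc 1 m, (v i - v (i - 1)) * w i = p i - p (i - 1) := by
    intro i hi
    obtain ⟨hi1, him⟩ := mem_Icc.mp hi
    have hv : v (i - 1) < v i := by
      simpa [Nat.sub_add_cancel hi1] using hvmono (i - 1) (by omega)
    rw [hw i hi1 him, mul_div_cancel₀ _ (sub_ne_zero.mpr hv.ne')]
  calc (∑ i ∈ Ico 1 m, p i * (F (w (i + 1)) - F (w i))) + p m * (1 - F (w m))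
      = ∑ i ∈ Ico 1 m, p i * ((1 - F (w i)) - (1 - F (w (i + 1)))) + p m * (1 - F (w m)) := by
        simp only [sub_sub_sub_cancel_left]
    _ = ∑ i ∈ Icc 1 m, (p i - p (i - 1)) * (1 - F (w i)) :=
        sum_Ico_mul_sub_add_eq_sum_Icc_sub_mul p (fun i => 1 - F (w i)) hp0 m
    _ = ∑ i ∈ Icc 1 m, (v i - v (i - 1)) * (w i * (1 - F (w i))) :=
        sum_congr rfl fun i hi => by rw [← mul_assoc, price_step i hi]

/-- Revenue expression: with undominated options `(v_i, p_i)` strictly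
increasing coordinatewise, `(v_0,p_0) = (0,0)`, and indifference points
`w_i = (p_i − p_{i−1})/(v_i − v_{i−1})`, the expected revenue
`Σ_{i=1}^{m-1} p_i (F(w_{i+1}) − F(w_i)) + p_m (1 − F(w_m))` equals
`Σ_{i=1}^m (v_i − v_{i−1}) R(w_i)` where `R(w) = w (1 − F(w))`. -/
theorem stmt4 (m : ℕ) (hm : 1 ≤ m) (v p : ℕ → ℝ)
    (hv0 : v 0 = 0) (hp0 : p 0 = 0)
    (hvmono : ∀ i, i < m → v i < v (i + 1))
    (hpmono : ∀ i, i < m → p i < p (i + 1))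
    (w : ℕ → ℝ)
    (hw : ∀ i, 1 ≤ i → i ≤ m → w i = (p i - p (i - 1)) / (v i - v (i - 1)))
    (hwinc : ∀ i, 1 ≤ i → i < m → w i < w (i + 1))
    (F : ℝ → ℝ) :
    (∑ i ∈ Finset.Ico 1 m, p i * (F (w (i + 1)) - F (w i)))
        + p m * (1 - F (w m))
      = ∑ i ∈ Finset.Icc 1 m, (v i - v (i - 1)) * (w i * (1 - F (w i))) :=
  stmt4_general m v p hp0 hvmono w hw F
end

section
/- Let lines L_1, ..., L_n be given by L_j(w) = v_j·w − p_j with v_j ≥ 0. Fix k ≥ 1, let w_1 < w_2 < w_3 be reals, and suppose line L_i is not among the top 2k−1 lines (by value) at w_2. Then either L_i is not among the top k lines at w_1, or L_i is not among the top k lines at w_3. -/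
/-!
Every line above `L i` at `w₂` that is not above it at `w₁` has overtaken it in between, so has
the larger slope and stays above it at `w₃`. Thus the `2k - 1` lines above `L i` at `w₂` lie in
the union of those above it at `w₁` and at `w₃`, and one of these has at least `k` elements.
-/

section Lines

variable {𝕜 : Type*} [Field 𝕜] [LinearOrder 𝕜] [IsStrictOrderedRing 𝕜] {v₁ v₂ p₁ p₂ x y : 𝕜}

theorem slope_lt_of_overtakes (hxy : x < y) (hx : v₂ * x - p₂ ≤ v₁ * x - p₁)
    (hy : v₁ * y - p₁ < v₂ * y - p₂) : v₁ < v₂ := by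
  by_contra! hv
  nlinarith [mul_le_mul_of_nonneg_right hv (sub_nonneg.2 hxy.le)]

theorem lt_of_slope_lt_of_le (hv : v₁ < v₂) (hxy : x ≤ y) (hx : v₁ * x - p₁ < v₂ * x - p₂) :
    v₁ * y - p₁ < v₂ * y - p₂ := by
  nlinarith [mul_le_mul_of_nonneg_right hv.le (sub_nonneg.2 hxy)]

end Lines

theorem Finset.le_card_or_le_card_of_subset_union {α : Type*} [DecidableEq α]
    {s t u : Finset α} {k : ℕ} (hs : 2 * k - 1 ≤ s.card) (hstu : s ⊆ t ∪ u) :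
    k ≤ t.card ∨ k ≤ u.card := by
  have := (card_le_card hstu).trans (card_union_le t u)
  omega

def linesAbove {ι 𝕜 : Type*} [Fintype ι] [DecidableEq ι] [LinearOrder 𝕜]
    (L : ι → 𝕜 → 𝕜) (i : ι) (w : 𝕜) : Finset ι :=
  Finset.univ.filter fun j => j ≠ i ∧ L i w < L j w

theorem linesAbove_subset_union {ι 𝕜 : Type*} [Fintype ι] [DecidableEq ι] [Field 𝕜]
    [LinearOrder 𝕜] [IsStrictOrderedRing 𝕜] {L : ι → 𝕜 → 𝕜} {v p : ι → 𝕜}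
    (hL : ∀ j x, L j x = v j * x - p j)
    (i : ι) {w₁ w₂ w₃ : 𝕜} (h12 : w₁ < w₂) (h23 : w₂ < w₃) :
    linesAbove L i w₂ ⊆ linesAbove L i w₁ ∪ linesAbove L i w₃ := by
  intro j hj
  simp only [linesAbove, Finset.mem_union, Finset.mem_filter, Finset.mem_univ, true_and] at hj ⊢
  obtain ⟨hji, hj₂⟩ := hj
  by_cases hj₁ : L i w₁ < L j w₁
  · exact .inl ⟨hji, hj₁⟩
  · simp only [hL] at hj₁ hj₂ ⊢
    have hv := slope_lt_of_overtakes h12 (not_lt.1 hj₁) hj₂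
    exact .inr ⟨hji, lt_of_slope_lt_of_le hv h23.le hj₂⟩

theorem stmt5_general (n : ℕ) (v p : Fin n → ℝ)
    (k : ℕ) (i : Fin n)
    (w₁ w₂ w₃ : ℝ) (h12 : w₁ < w₂) (h23 : w₂ < w₃)
    (L : Fin n → ℝ → ℝ) (hL : ∀ j x, L j x = v j * x - p j)
    (h2 : 2 * k - 1 ≤
      (Finset.univ.filter (fun j => j ≠ i ∧ L i w₂ < L j w₂)).card) :
    k ≤ (Finset.univ.filter (fun j => j ≠ i ∧ L i w₁ < L j w₁)).card ∨
    k ≤ (Finset.univ.filter (fun j => j ≠ i ∧ L i w₃ < L j w₃)).card :=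
  Finset.le_card_or_le_card_of_subset_union h2 (linesAbove_subset_union hL i h12 h23)

/-- If a line `L i` is not among the top `2k−1` lines at `w₂`, then it is not
among the top `k` lines at `w₁` or it is not among the top `k` lines at `w₃`,
whenever `w₁ < w₂ < w₃` (lines in general position). -/
theorem stmt5 (n : ℕ) (v p : Fin n → ℝ) (hv : ∀ j, 0 ≤ v j)
    (k : ℕ) (hk : 1 ≤ k) (i : Fin n)
    (w₁ w₂ w₃ : ℝ) (h12 : w₁ < w₂) (h23 : w₂ < w₃)
    (L : Fin n → ℝ → ℝ) (hL : ∀ j x, L j x = v j * x - p j)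
    (hgen : ∀ j, j ≠ i →
      L j w₁ ≠ L i w₁ ∧ L j w₂ ≠ L i w₂ ∧ L j w₃ ≠ L i w₃)
    (h2 : 2 * k - 1 ≤
      (Finset.univ.filter (fun j => j ≠ i ∧ L i w₂ < L j w₂)).card) :
    k ≤ (Finset.univ.filter (fun j => j ≠ i ∧ L i w₁ < L j w₁)).card ∨
    k ≤ (Finset.univ.filter (fun j => j ≠ i ∧ L i w₃ < L j w₃)).card :=
  stmt5_general n v p k i w₁ w₂ w₃ h12 h23 L hL h2
end

section
/- Let A be an assortment and let u_A(w) = max_{S ⊆ A} (v(S)·w − Σ_{i∈S} p_i) be the indirect utility of a type-w buyer. If assortment B satisfies u_B(w) ≤ u_A(w) for all w ∈ [0,H] and u_B(H) = u_A(H), and the revenue curve R is twice differentiable with R'' ≤ 0 on [0,H], then Rev(B) ≥ Rev(A), where Rev(·) is given by the integral representation Rev(T) = ∫_0^H u_T(w) R''(w) dw − R'(H) u_T(H). -/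
open MeasureTheory

theorem intervalIntegral.integral_mul_le_integral_mul_of_le_of_nonpos {f g h : ℝ → ℝ} {a b : ℝ}
    (hab : a ≤ b) (hf : IntervalIntegrable (fun x => f x * h x) volume a b)
    (hg : IntervalIntegrable (fun x => g x * h x) volume a b)
    (hfg : ∀ x ∈ Set.Icc a b, f x ≤ g x) (hh : ∀ x ∈ Set.Icc a b, h x ≤ 0) :
    ∫ x in a..b, g x * h x ≤ ∫ x in a..b, f x * h x :=
  intervalIntegral.integral_mono_on hab hg hf fun x hx =>
    mul_le_mul_of_nonpos_right (hfg x hx) (hh x hx)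

theorem stmt9_general {ι : Type*}
    (H : ℝ) (hH : 0 ≤ H)
    (u : Finset ι → ℝ → ℝ)
    (A B : Finset ι)
    (hle : ∀ w ∈ Set.Icc (0 : ℝ) H, u B w ≤ u A w)
    (htop : u B H = u A H)
    (R' R'' : ℝ → ℝ)
    (hconc : ∀ x ∈ Set.Icc (0 : ℝ) H, R'' x ≤ 0)
    (hInt : ∀ T : Finset ι,
      IntervalIntegrable (fun w => u T w * R'' w) volume 0 H)
    (Rev : Finset ι → ℝ)
    (hRev : ∀ T : Finset ι,
      Rev T = (∫ w in (0 : ℝ)..H, u T w * R'' w) - R' H * u T H) :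
    Rev A ≤ Rev B := by
  rw [hRev A, hRev B, htop]
  have hintegral := intervalIntegral.integral_mul_le_integral_mul_of_le_of_nonpos
    hH (hInt B) (hInt A) hle hconc
  linarith

/-- Monotonicity principle for concave revenue curves: if `u_B ≤ u_A`
pointwise on `[0, H]` with equality at `H`, and `R'' ≤ 0` on `[0, H]`, then
`Rev B ≥ Rev A` for the integral representation
`Rev T = ∫_0^H u_T(w) R''(w) dw − R'(H) u_T(H)`. -/
theorem stmt9 {ι : Type*} [DecidableEq ι] [Fintype ι]
    (v : Finset ι → ℝ) (p : ι → ℝ)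
    (H : ℝ) (hH : 0 ≤ H)
    (u : Finset ι → ℝ → ℝ)
    (hu : ∀ (T : Finset ι) (w : ℝ),
      u T w = T.powerset.sup' (Finset.powerset_nonempty T)
        (fun S => v S * w - ∑ i ∈ S, p i))
    (A B : Finset ι)
    (hle : ∀ w ∈ Set.Icc (0 : ℝ) H, u B w ≤ u A w)
    (htop : u B H = u A H)
    (R R' R'' : ℝ → ℝ)
    (hR' : ∀ x ∈ Set.Icc (0 : ℝ) H, HasDerivAt R (R' x) x)
    (hR'' : ∀ x ∈ Set.Icc (0 : ℝ) H, HasDerivAt R' (R'' x) x)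
    (hconc : ∀ x ∈ Set.Icc (0 : ℝ) H, R'' x ≤ 0)
    (hInt : ∀ T : Finset ι,
      IntervalIntegrable (fun w => u T w * R'' w) volume 0 H)
    (Rev : Finset ι → ℝ)
    (hRev : ∀ T : Finset ι,
      Rev T = (∫ w in (0 : ℝ)..H, u T w * R'' w) - R' H * u T H) :
    Rev A ≤ Rev B :=
  stmt9_general H hH u A B hle htop R' R'' hconc hInt Rev hRev
end

section
/- For the knapsack instance with item values v_1,...,v_m ≥ 0, weights w_1,...,w_m ≥ 0, and capacity W, define an XOS valuation with 2 additive clauses on n = m+1 items: clause c_1 with c_1({i}) = v_i + 1 for i ≤ m and c_1({n}) = Σ_i v_i + 1 + W; clause c_2 with c_2({i}) = w_i + v_i + 1 for i ≤ m and c_2({n}) = 0; and prices p_i = v_i for i ≤ m, p_n = Σ_i v_i + 1. Then the optimal noiseless assortment revenue equals p_n plus the optimal knapsack value max{Σ_i v_i x_i : Σ_i w_i x_i ≤ W, x_i ∈ {0,1}}. -/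
/-!
Subtracting prices turns the clauses into surplus vectors `f = c₁ - p` (equal to `W` on the
special item `n = none` and to `1` elsewhere) and `g = c₂ - p` (equal to `-p n < 0` on `n` and to
`w i + 1` elsewhere); the buyer's utility is `max (∑ f) (∑ g)`. A purchase without `n` pays at
most `∑ v i < p n`. A purchase `{n} ∪ y` must beat `y` itself, and since `g n < 0` it can only do
so through `f`, which gives `∑_{y} (w i + 1) ≤ W + #y`: `y` is a feasible knapsack. Conversely,
offering `{n} ∪ x` for an optimal knapsack `x` makes the buyer take all of it.
-/

open Finset

theorem max_sum_sub_sum {α M : Type*} [AddCommGroup M] [LinearOrder M] [IsOrderedAddMonoid M]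
    (s : Finset α) (a₁ a₂ p : α → M) :
    max (∑ i ∈ s, a₁ i) (∑ i ∈ s, a₂ i) - ∑ i ∈ s, p i =
      max (∑ i ∈ s, (a₁ i - p i)) (∑ i ∈ s, (a₂ i - p i)) := by
  rw [sum_sub_distrib, sum_sub_distrib, max_sub_sub_right]

section TwoClauseUtility

variable {α M : Type*} [DecidableEq α] [AddCommGroup M] [LinearOrder M] [IsOrderedAddMonoid M]
  {f g : α → M} {j : α} {S T : Finset α}

theorem sum_le_sum_insert_of_forall_subset_max_le (hj : j ∉ S) (hST : insert j S ⊆ T)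
    (hgj : g j < 0)
    (h : ∀ A ⊆ T, max (∑ i ∈ A, f i) (∑ i ∈ A, g i) ≤
      max (∑ i ∈ insert j S, f i) (∑ i ∈ insert j S, g i)) :
    ∑ i ∈ S, g i ≤ ∑ i ∈ insert j S, f i := by
  have hS := (le_max_right _ _).trans (h S ((subset_insert j S).trans hST))
  rw [sum_insert hj (f := g)] at hS
  exact (le_max_iff.1 hS).resolve_right (not_le.2 (add_lt_of_neg_left _ hgj))

theorem max_sum_le_max_sum_insert (hf : ∀ i ∈ insert j S, 0 ≤ f i)
    (hgj : g j ≤ 0) (hg : ∀ i ∈ S, 0 ≤ g i) (hfg : ∑ i ∈ S, g i ≤ ∑ i ∈ insert j S, f i)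
    {A : Finset α} (hA : A ⊆ insert j S) :
    max (∑ i ∈ A, f i) (∑ i ∈ A, g i) ≤
      max (∑ i ∈ insert j S, f i) (∑ i ∈ insert j S, g i) := by
  refine max_le ?_ ((?_ : ∑ i ∈ A, g i ≤ ∑ i ∈ S, g i).trans hfg) |>.trans (le_max_left _ _)
  · exact sum_le_sum_of_subset_of_nonneg hA fun i hi _ => hf i hi
  · by_cases hjA : j ∈ A
    · rw [← add_sum_erase A g hjA]
      exact (add_le_of_nonpos_left hgj).trans
        (sum_le_sum_of_subset_of_nonneg (subset_insert_iff.1 hA) fun i hi _ => hg i hi)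
    · exact sum_le_sum_of_subset_of_nonneg ((subset_insert_iff_of_notMem hjA).1 hA)
        fun i hi _ => hg i hi

end TwoClauseUtility

theorem Finset.sum_insert_none_map_some {α M : Type*} [DecidableEq α] [AddCommMonoid M]
    (s : Finset α) (f : Option α → M) :
    ∑ i ∈ insert none (s.map .some), f i = f none + ∑ i ∈ s, f (some i) := by
  rw [sum_insert (by simp), sum_map]
  rfl

section KnapsackSurplus

variable {α : Type*} [DecidableEq α] {ww : α → ℝ} {W : ℝ} {f g : Option α → ℝ}

theorem sum_le_of_forall_subset_max_le (hf : ∀ i, f (some i) = 1) (hfn : f none = W)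
    (hg : ∀ i, g (some i) = ww i + 1) (hgn : g none < 0) {y : Finset α} {T : Finset (Option α)}
    (hyT : insert none (y.map .some) ⊆ T)
    (h : ∀ A ⊆ T, max (∑ i ∈ A, f i) (∑ i ∈ A, g i) ≤
      max (∑ i ∈ insert none (y.map .some), f i) (∑ i ∈ insert none (y.map .some), g i)) :
    ∑ i ∈ y, ww i ≤ W := by
  have hfg := sum_le_sum_insert_of_forall_subset_max_le (by simp) hyT hgn h
  simp only [sum_map, Function.Embedding.some_apply, sum_insert_none_map_some, hf, hg, hfn,
    sum_add_distrib, sum_const, nsmul_one] at hfg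
  linarith

theorem forall_subset_max_le_of_sum_le (hW : 0 ≤ W) (hww : ∀ i, 0 ≤ ww i)
    (hf : ∀ i, f (some i) = 1) (hfn : f none = W) (hg : ∀ i, g (some i) = ww i + 1)
    (hgn : g none ≤ 0) {x : Finset α} (hx : ∑ i ∈ x, ww i ≤ W) :
    ∀ A ⊆ insert none (x.map .some), max (∑ i ∈ A, f i) (∑ i ∈ A, g i) ≤
      max (∑ i ∈ insert none (x.map .some), f i) (∑ i ∈ insert none (x.map .some), g i) := by
  refine fun A hA => max_sum_le_max_sum_insert ?_ hgn ?_ ?_ hA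
  · simp only [forall_mem_insert, forall_mem_map, Function.Embedding.some_apply, hf, hfn]
    exact ⟨hW, fun _ _ => zero_le_one⟩
  · simp only [forall_mem_map, Function.Embedding.some_apply, hg]
    exact fun i _ => by linarith [hww i]
  · simp only [sum_map, Function.Embedding.some_apply, sum_insert_none_map_some, hf, hg, hfn,
      sum_add_distrib, sum_const, nsmul_one]
    linarith

end KnapsackSurplus

/-- Knapsack reduction: for the 2-clause XOS valuation constructed from a
knapsack instance (`none` plays the role of the special item `n = m + 1`), the
optimal noiseless assortment revenue equals `p n` plus the optimal knapsack
value. -/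
theorem stmt15 (m : ℕ) (vv ww : Fin m → ℝ)
    (hvv : ∀ i, 0 ≤ vv i) (hww : ∀ i, 0 ≤ ww i)
    (W : ℝ) (hW : 0 ≤ W)
    (a₁ a₂ : Option (Fin m) → ℝ)
    (ha₁ : ∀ i, a₁ (some i) = vv i + 1)
    (ha₁n : a₁ none = (∑ i, vv i) + 1 + W)
    (ha₂ : ∀ i, a₂ (some i) = ww i + vv i + 1)
    (ha₂n : a₂ none = 0)
    (p : Option (Fin m) → ℝ)
    (hp : ∀ i, p (some i) = vv i)
    (hpn : p none = (∑ i, vv i) + 1)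
    (v : Finset (Option (Fin m)) → ℝ)
    (hv : ∀ S, v S = max (∑ i ∈ S, a₁ i) (∑ i ∈ S, a₂ i))
    -- K is the optimal knapsack value
    (K : ℝ)
    (hK1 : ∃ x : Finset (Fin m), (∑ i ∈ x, ww i) ≤ W ∧ (∑ i ∈ x, vv i) = K)
    (hK2 : ∀ x : Finset (Fin m), (∑ i ∈ x, ww i) ≤ W → (∑ i ∈ x, vv i) ≤ K)
    -- OPT is the optimal noiseless assortment revenue
    (OPT : ℝ)
    (hO1 : ∃ T B : Finset (Option (Fin m)), B ⊆ T ∧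
      (∀ A ⊆ T, v A - ∑ i ∈ A, p i ≤ v B - ∑ i ∈ B, p i) ∧
      (∑ i ∈ B, p i) = OPT)
    (hO2 : ∀ T B : Finset (Option (Fin m)), B ⊆ T →
      (∀ A ⊆ T, v A - ∑ i ∈ A, p i ≤ v B - ∑ i ∈ B, p i) →
      (∑ i ∈ B, p i) ≤ OPT) :
    OPT = p none + K := by
  set f : Option (Fin m) → ℝ := fun i => a₁ i - p i
  set g : Option (Fin m) → ℝ := fun i => a₂ i - p i
  have hu : ∀ S, v S - ∑ i ∈ S, p i = max (∑ i ∈ S, f i) (∑ i ∈ S, g i) := fun S => by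
    rw [hv, max_sum_sub_sum]
  have hf : ∀ i, f (some i) = 1 := fun i => by simp [f, ha₁, hp]
  have hfn : f none = W := by simp only [f, ha₁n, hpn]; ring
  have hg : ∀ i, g (some i) = ww i + 1 := fun i => by simp [g, ha₂, hp]; ring
  have hgn : g none < 0 := by
    simp only [g, ha₂n, hpn]
    linarith [sum_nonneg fun i (_ : i ∈ univ) => hvv i]
  refine le_antisymm ?_ ?_
  · obtain ⟨T, B, hBT, hB, rfl⟩ := hO1
    simp only [hu] at hB
    by_cases hnB : none ∈ B
    · obtain ⟨y, rfl⟩ : ∃ y, B = insert none (y.map .some) :=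
        ⟨B.eraseNone, by rw [map_some_eraseNone, insert_erase hnB]⟩
      rw [sum_insert_none_map_some]
      simpa only [hp, add_le_add_iff_left] using
        hK2 y (sum_le_of_forall_subset_max_le hf hfn hg hgn hBT hB)
    · obtain ⟨y, rfl⟩ : ∃ y, B = y.map .some :=
        ⟨B.eraseNone, by rw [map_some_eraseNone, erase_eq_of_notMem hnB]⟩
      have hK : 0 ≤ K := by simpa using hK2 ∅ (by simpa using hW)
      simp only [sum_map, Function.Embedding.some_apply, hp]
      linarith [sum_le_univ_sum_of_nonneg (s := y) hvv]
  · obtain ⟨x, hxW, rfl⟩ := hK1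
    have hT := hO2 _ _ subset_rfl fun A hA => by
      simpa only [hu] using forall_subset_max_le_of_sum_le hW hww hf hfn hg hgn.le hxW A hA
    simpa only [sum_insert_none_map_some, hp] using hT
end

section
/- Let s_1 ≤ s_2 ≤ ... ≤ s_m be nonnegative reals and let F_1 ≤ F_2 ≤ ... ≤ F_m and F̂_1, ..., F̂_m be values in [0,1] with |F_i − F̂_i| < ε for all i. Define Rev = Σ_{i=1}^{m−1}(F_{i+1} − F_i)s_i + (1 − F_m)s_m and R̂ev the same expression with F̂ in place of F. Then |Rev − R̂ev| ≤ ε·s_m. -/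
/-!
After Abel summation the revenue difference becomes
`-(D₁ s₁ + Σᵢ Dᵢ₊₁ (sᵢ₊₁ - sᵢ))` with `Dᵢ = Fᵢ - F̂ᵢ`. Since `s₁ ≥ 0` and the increments
`sᵢ₊₁ - sᵢ` are nonnegative, the triangle inequality bounds this by `ε` times the telescoping
sum `s₁ + Σᵢ (sᵢ₊₁ - sᵢ) = sₘ`.
-/

open Finset

def revenue (m : ℕ) (s F : ℕ → ℝ) : ℝ :=
  (∑ i ∈ Ico 1 m, (F (i + 1) - F i) * s i) + (1 - F m) * s m

lemma revenue_sub_revenue (m : ℕ) (s F G : ℕ → ℝ) :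
    revenue m s F - revenue m s G =
      (∑ i ∈ Ico 1 m, ((F - G) (i + 1) - (F - G) i) * s i) - (F - G) m * s m := by
  simp only [revenue, Pi.sub_apply, sub_mul, sum_sub_distrib]
  ring

lemma sum_Ico_sub_mul_sub_mul_eq {m : ℕ} (hm : 1 ≤ m) (D s : ℕ → ℝ) :
    (∑ i ∈ Ico 1 m, (D (i + 1) - D i) * s i) - D m * s m =
      -(D 1 * s 1 + ∑ i ∈ Ico 1 m, D (i + 1) * (s (i + 1) - s i)) := by
  induction m, hm using Nat.le_induction with
  | base => simp
  | succ m hm ih =>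
    rw [sum_Ico_succ_top hm, sum_Ico_succ_top hm]
    linear_combination ih

lemma abs_sum_Ico_sub_mul_sub_mul_le {m : ℕ} (hm : 1 ≤ m) {ε : ℝ} {D s : ℕ → ℝ}
    (hs1 : 0 ≤ s 1) (hs : ∀ i, 1 ≤ i → i < m → s i ≤ s (i + 1))
    (hD : ∀ i, 1 ≤ i → i ≤ m → |D i| ≤ ε) :
    |(∑ i ∈ Ico 1 m, (D (i + 1) - D i) * s i) - D m * s m| ≤ ε * s m := by
  rw [sum_Ico_sub_mul_sub_mul_eq hm, abs_neg]
  calc |D 1 * s 1 + ∑ i ∈ Ico 1 m, D (i + 1) * (s (i + 1) - s i)|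
      ≤ |D 1 * s 1| + ∑ i ∈ Ico 1 m, |D (i + 1) * (s (i + 1) - s i)| :=
        (abs_add_le _ _).trans (add_le_add_right (abs_sum_le_sum_abs _ _) _)
    _ ≤ ε * s 1 + ∑ i ∈ Ico 1 m, ε * (s (i + 1) - s i) := by
        gcongr with i hi
        · rw [abs_mul, abs_of_nonneg hs1]
          exact mul_le_mul_of_nonneg_right (hD 1 le_rfl hm) hs1
        · obtain ⟨hi1, him⟩ := mem_Ico.mp hi
          have hinc : 0 ≤ s (i + 1) - s i := sub_nonneg.mpr (hs i hi1 him)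
          rw [abs_mul, abs_of_nonneg hinc]
          exact mul_le_mul_of_nonneg_right (hD (i + 1) (by omega) him) hinc
    _ = ε * s m := by rw [← mul_sum, sum_Ico_sub s hm]; ring

theorem stmt17_general (m : ℕ) (hm : 1 ≤ m) (ε : ℝ)
    (s F Fh : ℕ → ℝ)
    (hs1 : 0 ≤ s 1)
    (hsmono : ∀ i, 1 ≤ i → i < m → s i ≤ s (i + 1))
    (herr : ∀ i, 1 ≤ i → i ≤ m → |F i - Fh i| < ε) :
    |((∑ i ∈ Finset.Ico 1 m, (F (i + 1) - F i) * s i) + (1 - F m) * s m)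
      - ((∑ i ∈ Finset.Ico 1 m, (Fh (i + 1) - Fh i) * s i)
          + (1 - Fh m) * s m)| ≤ ε * s m := by
  change |revenue m s F - revenue m s Fh| ≤ ε * s m
  rw [revenue_sub_revenue]
  exact abs_sum_Ico_sub_mul_sub_mul_le hm hs1 hsmono fun i hi1 him => (herr i hi1 him).le

/-- Robustness of the revenue computed from estimated CDF values: if
`s_1 ≤ … ≤ s_m` are nonnegative payments, `F_1 ≤ … ≤ F_m` are CDF values and
`F̂_i` are estimates with `|F_i − F̂_i| < ε`, then the two revenue expressions
differ by at most `ε · s_m`. -/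
theorem stmt17 (m : ℕ) (hm : 1 ≤ m) (ε : ℝ) (hε : 0 ≤ ε)
    (s F Fh : ℕ → ℝ)
    (hs1 : 0 ≤ s 1)
    (hsmono : ∀ i, 1 ≤ i → i < m → s i ≤ s (i + 1))
    (hFmono : ∀ i, 1 ≤ i → i < m → F i ≤ F (i + 1))
    (hFrange : ∀ i, 1 ≤ i → i ≤ m → 0 ≤ F i ∧ F i ≤ 1)
    (hFhrange : ∀ i, 1 ≤ i → i ≤ m → 0 ≤ Fh i ∧ Fh i ≤ 1)
    (herr : ∀ i, 1 ≤ i → i ≤ m → |F i - Fh i| < ε) :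
    |((∑ i ∈ Finset.Ico 1 m, (F (i + 1) - F i) * s i) + (1 - F m) * s m)
      - ((∑ i ∈ Finset.Ico 1 m, (Fh (i + 1) - Fh i) * s i)
          + (1 - Fh m) * s m)| ≤ ε * s m :=
  stmt17_general m hm ε s F Fh hs1 hsmono herr
end
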